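/- arXiv:2209.13675 — 4 statements merged into one kernel-verified Lean document; each statement's English description precedes it below -/
import Mathlib

section
/- Fix d ≥ 2 and p = (p₁,…,p_d) ∈ (0,1)^d. Let I = (I₁,…,I_d) be a {0,1}^d-valued random vector with P(I_m = 1) = p_m for each m, let U₀ = (U₀,₁,…,U₀,_d) and U₁ = (U₁,₁,…,U₁,_d) be vectors of i.i.d. standard uniform random variables on [0,1], with I, U₀, U₁ mutually independent, and set U_m = U₀,ₘ^{1-p_m}·U₁,ₘ^{I_m}. Then for all u = (u₁,…,u_d) ∈ [0,1]^d, P(U₁ ≤ u₁, …, U_d ≤ u_d) = Σ_{i∈{0,1}^d} P(I = i) · Π_{m=1}^{d} ( u_m^{1/(1-p_m)} - i_m·( u_m^{1/(1-p_m)} - u_m )/p_m ). -/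
/-!
Conditionally on `I = i`, the pairs `(U₀ₘ, U₁ₘ)` are still i.i.d. uniform on `[0,1]²`, so the
probability factorises over `m`. For `c = uₘ^(1/(1-pₘ))`, the factor is
`P(U₀ₘ^(1-pₘ) ≤ uₘ) = c` when `iₘ = 0`, and when `iₘ = 1` Fubini gives
`P(U₀ₘ^(1-pₘ) U₁ₘ ≤ uₘ) = ∫₀¹ min(1, uₘ x^(pₘ-1)) dx = c + ∫_c^1 uₘ x^(pₘ-1) dx = c + (uₘ - c)/pₘ`,
using `uₘ c^pₘ = c`.
-/

open MeasureTheory ProbabilityTheory Set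

/-- The real value (`0` or `1`) of a Bernoulli outcome. -/
noncomputable def bval (b : Bool) : ℝ := if b then 1 else 0

instance : IsProbabilityMeasure (volume.restrict (Icc (0 : ℝ) 1)) :=
  ⟨by simp [Real.volume_Icc]⟩

local notation "𝕌" => (volume.restrict (Icc (0 : ℝ) 1) : Measure ℝ)

section UniformUnitInterval

variable {a p u : ℝ}

lemma uniform_Iic (s : ℝ) : 𝕌 (Iic s) = ENNReal.ofReal (min s 1) := by
  have h : Iic s ∩ Icc 0 1 = Icc 0 (min s 1) := by
    ext y
    simp only [mem_inter_iff, mem_Iic, mem_Icc, le_min_iff]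
    tauto
  rw [Measure.restrict_apply measurableSet_Iic, h, Real.volume_Icc, sub_zero]

lemma uniform_rpow_le (ha : 0 < a) (hu0 : 0 ≤ u) (hu1 : u ≤ 1) :
    𝕌 {x | x ^ a ≤ u} = ENNReal.ofReal (u ^ a⁻¹) := by
  have h : {x : ℝ | x ^ a ≤ u} ∩ Icc 0 1 = Icc 0 (u ^ a⁻¹) := by
    ext x
    simp only [mem_inter_iff, mem_ofPred_eq, mem_Icc]
    constructor
    · rintro ⟨hxu, hx0, -⟩
      exact ⟨hx0, (Real.le_rpow_inv_iff_of_pos hx0 hu0 ha).2 hxu⟩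
    · rintro ⟨hx0, hxc⟩
      exact ⟨(Real.le_rpow_inv_iff_of_pos hx0 hu0 ha).1 hxc, hx0,
        hxc.trans (Real.rpow_le_one hu0 hu1 (inv_nonneg.2 ha.le))⟩
  rw [Measure.restrict_apply (measurableSet_le (by fun_prop) measurable_const), h,
    Real.volume_Icc, sub_zero]

lemma uniform_rpow_mul_le_of_le {x : ℝ} (ha : 0 < a) (hu0 : 0 ≤ u) (hx0 : 0 ≤ x)
    (hx : x ≤ u ^ a⁻¹) : 𝕌 {y | x ^ a * y ≤ u} = 1 := by
  have hxa : x ^ a ≤ u := (Real.le_rpow_inv_iff_of_pos hx0 hu0 ha).1 hx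
  have hsub : Icc (0 : ℝ) 1 ⊆ {y | x ^ a * y ≤ u} := fun y hy =>
    (mul_le_of_le_one_right (by positivity) hy.2).trans hxa
  rw [Measure.restrict_apply_superset hsub, Real.volume_Icc, sub_zero, ENNReal.ofReal_one]

lemma uniform_rpow_mul_le_of_lt {x : ℝ} (ha : 0 < a) (hu0 : 0 ≤ u) (hx : u ^ a⁻¹ < x) :
    𝕌 {y | x ^ a * y ≤ u} = ENNReal.ofReal (u * x ^ (-a)) := by
  have hx0 : 0 < x := (Real.rpow_nonneg hu0 _).trans_lt hx
  have hxa : u < x ^ a := (Real.rpow_inv_lt_iff_of_pos hu0 hx0.le ha).1 hx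
  have hset : {y | x ^ a * y ≤ u} = Iic (u * x ^ (-a)) := by
    ext y
    rw [mem_ofPred_eq, mem_Iic, Real.rpow_neg hx0.le, ← div_eq_mul_inv,
      le_div_iff₀ (by positivity), mul_comm]
  rw [hset, uniform_Iic, min_eq_left]
  rw [Real.rpow_neg hx0.le, ← div_eq_mul_inv, div_le_one (by positivity)]
  exact hxa.le

lemma rpow_inv_one_sub_le_self (hp0 : 0 ≤ p) (hp1 : p < 1) (hu0 : 0 ≤ u) (hu1 : u ≤ 1) :
    u ^ (1 - p)⁻¹ ≤ u :=
  Real.rpow_le_self_of_le_one hu0 hu1 (one_le_inv₀ (by linarith) |>.2 (by linarith))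

lemma mul_rpow_inv_one_sub_rpow (hp1 : p < 1) (hu0 : 0 ≤ u) :
    u * (u ^ (1 - p)⁻¹) ^ p = u ^ (1 - p)⁻¹ := by
  have hexp : 1 + (1 - p)⁻¹ * p = (1 - p)⁻¹ := by field_simp [(by linarith : 1 - p ≠ 0)]; ring
  rw [← Real.rpow_mul hu0, ← Real.rpow_one_add' hu0 (by rw [hexp]; positivity), hexp]

lemma integral_mul_rpow_neg_one_sub (hp0 : 0 < p) (hp1 : p < 1) (hu0 : 0 ≤ u) :
    ∫ x in u ^ (1 - p)⁻¹..1, u * x ^ (-(1 - p)) = (u - u ^ (1 - p)⁻¹) / p := by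
  rw [intervalIntegral.integral_const_mul, integral_rpow (Or.inl (by linarith)),
    show -(1 - p) + 1 = p by ring, Real.one_rpow, mul_div, mul_sub, mul_one,
    mul_rpow_inv_one_sub_rpow hp1 hu0]

lemma uniform_prod_rpow_mul_le (hp0 : 0 < p) (hp1 : p < 1) (hu0 : 0 ≤ u) (hu1 : u ≤ 1) :
    (Measure.prod 𝕌 𝕌) {q : ℝ × ℝ | q.1 ^ (1 - p) * q.2 ≤ u}
      = ENNReal.ofReal (u ^ (1 - p)⁻¹ + (u - u ^ (1 - p)⁻¹) / p) := by
  set c := u ^ (1 - p)⁻¹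
  have ha : 0 < 1 - p := by linarith
  have hc0 : 0 ≤ c := Real.rpow_nonneg hu0 _
  have hcu : c ≤ u := rpow_inv_one_sub_le_self hp0.le hp1 hu0 hu1
  have h_le : ∀ x ∈ Icc 0 c, 𝕌 (Prod.mk x ⁻¹' {q : ℝ × ℝ | q.1 ^ (1 - p) * q.2 ≤ u}) = 1 :=
    fun x hx => uniform_rpow_mul_le_of_le ha hu0 hx.1 hx.2
  have h_gt : ∀ x ∈ Ioc c 1, 𝕌 (Prod.mk x ⁻¹' {q : ℝ × ℝ | q.1 ^ (1 - p) * q.2 ≤ u})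
      = ENNReal.ofReal (u * x ^ (-(1 - p))) :=
    fun x hx => uniform_rpow_mul_le_of_lt ha hu0 hx.1
  have hint : IntegrableOn (fun x : ℝ => u * x ^ (-(1 - p))) (Ioc c 1) := by
    have h := intervalIntegral.intervalIntegrable_rpow' (a := c) (b := 1)
      (show (-1 : ℝ) < -(1 - p) by linarith)
    exact ((intervalIntegrable_iff_integrableOn_Ioc_of_le (hcu.trans hu1)).1 h).const_mul u
  have hnonneg : 0 ≤ᵐ[volume.restrict (Ioc c 1)] fun x : ℝ => u * x ^ (-(1 - p)) :=
    ae_restrict_of_forall_mem measurableSet_Ioc fun x hx =>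
      mul_nonneg hu0 (Real.rpow_nonneg (hc0.trans hx.1.le) _)
  have hsplit (f : ℝ → ENNReal) :
      ∫⁻ x in Icc 0 1, f x = (∫⁻ x in Icc 0 c, f x) + ∫⁻ x in Ioc c 1, f x := by
    rw [← Icc_union_Ioc_eq_Icc hc0 (hcu.trans hu1),
      lintegral_union measurableSet_Ioc ((Iic_disjoint_Ioc le_rfl).mono_left Icc_subset_Iic_self)]
  rw [Measure.prod_apply (measurableSet_le (by fun_prop) measurable_const), hsplit,
    setLIntegral_congr_fun measurableSet_Icc h_le, setLIntegral_congr_fun measurableSet_Ioc h_gt,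
    setLIntegral_one, Real.volume_Icc, sub_zero, ← ofReal_integral_eq_lintegral_ofReal hint hnonneg,
    ← intervalIntegral.integral_of_le (hcu.trans hu1), integral_mul_rpow_neg_one_sub hp0 hp1 hu0,
    ENNReal.ofReal_add hc0 (div_nonneg (sub_nonneg.2 hcu) hp0.le)]

lemma toReal_uniform_prod_rpow_mul_rpow_bval_le (hp0 : 0 < p) (hp1 : p < 1) (hu0 : 0 ≤ u)
    (hu1 : u ≤ 1) (b : Bool) :
    ((Measure.prod 𝕌 𝕌) {q : ℝ × ℝ | q.1 ^ (1 - p) * q.2 ^ bval b ≤ u}).toReal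
      = u ^ (1 - p)⁻¹ - bval b * ((u ^ (1 - p)⁻¹ - u) / p) := by
  have hc0 : 0 ≤ u ^ (1 - p)⁻¹ := Real.rpow_nonneg hu0 _
  cases b with
  | false =>
    have hset : {q : ℝ × ℝ | q.1 ^ (1 - p) * q.2 ^ bval false ≤ u}
        = {x : ℝ | x ^ (1 - p) ≤ u} ×ˢ univ := by
      ext q
      simp [bval]
    rw [hset, Measure.prod_prod, measure_univ, mul_one, uniform_rpow_le (by linarith) hu0 hu1,
      ENNReal.toReal_ofReal hc0]
    simp [bval]
  | true =>
    have hcu := rpow_inv_one_sub_le_self hp0.le hp1 hu0 hu1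
    simp only [bval, ↓reduceIte, Real.rpow_one, one_mul]
    rw [uniform_prod_rpow_mul_le hp0 hp1 hu0 hu1,
      ENNReal.toReal_ofReal (add_nonneg hc0 (div_nonneg (sub_nonneg.2 hcu) hp0.le))]
    ring

end UniformUnitInterval

section Independence

variable {Ω : Type*} [MeasurableSpace Ω] {P : Measure Ω}

lemma measure_setOf_mem_eq_tsum_of_indepFun {ι β : Type*} [Countable ι] [MeasurableSpace ι]
    [MeasurableSingletonClass ι] [MeasurableSpace β] {I : Ω → ι} {J : Ω → β}
    (hI : Measurable I) (hJ : Measurable J) (hIJ : IndepFun I J P) {S : ι → Set β}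
    (hS : ∀ i, MeasurableSet (S i)) :
    P {ω | J ω ∈ S (I ω)} = ∑' i, P (I ⁻¹' {i}) * P.map J (S i) := by
  have hunion : {ω | J ω ∈ S (I ω)} = ⋃ i, I ⁻¹' {i} ∩ J ⁻¹' S i := by
    ext ω
    simp
  rw [hunion, measure_iUnion (fun i j hij => ((pairwise_disjoint_fiber I) hij).mono
    inter_subset_left inter_subset_left) fun i => hI (measurableSet_singleton i) |>.inter (hJ (hS i))]
  congr with i
  rw [hIJ.measure_inter_preimage_eq_mul _ _ (measurableSet_singleton i) (hS i),
    Measure.map_apply hJ (hS i)]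

lemma map_prodMk_eq_pi_prod_of_iIndepFun [IsProbabilityMeasure P] {ι α : Type*} [Fintype ι]
    [MeasurableSpace α] {X Y : ι → Ω → α} (hX : ∀ i, Measurable (X i))
    (hY : ∀ i, Measurable (Y i)) (hXY : iIndepFun (Sum.elim X Y) P) :
    P.map (fun ω i => (X i ω, Y i ω)) = Measure.pi fun i => (P.map (X i)).prod (P.map (Y i)) := by
  have hmeas : ∀ j, Measurable (Sum.elim X Y j) := Sum.forall.2 ⟨hX, hY⟩
  have hlaw := (iIndepFun_iff_map_fun_eq_pi_map fun j => (hmeas j).aemeasurable).1 hXY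
  have hregroup : (fun ω i => (X i ω, Y i ω)) = (MeasurableEquiv.arrowProdEquivProdArrow α α ι).symm
      ∘ MeasurableEquiv.sumPiEquivProdPi (fun _ => α) ∘ fun ω j => Sum.elim X Y j ω := rfl
  rw [hregroup, ← Measure.map_map (by fun_prop) (by fun_prop),
    ← Measure.map_map (by fun_prop) (measurable_pi_lambda _ hmeas), hlaw,
    (measurePreserving_sumPiEquivProdPi _).map_eq,
    (measurePreserving_arrowProdEquivProdArrow α α ι _ _).symm.map_eq]
  rfl

end Independence

theorem gfgm_copula_of_stochastic_representation_general
    {Ω : Type*} [MeasurableSpace Ω] (P : Measure Ω) [IsProbabilityMeasure P]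
    (d : ℕ) (p : Fin d → ℝ) (hp : ∀ m, p m ∈ Ioo (0 : ℝ) 1)
    (I : Ω → Fin d → Bool) (U₀ U₁ : Fin d → Ω → ℝ)
    (hI : Measurable I) (hU₀ : ∀ m, Measurable (U₀ m)) (hU₁ : ∀ m, Measurable (U₁ m))
    (hU₀law : ∀ m, P.map (U₀ m) = volume.restrict (Icc (0 : ℝ) 1))
    (hU₁law : ∀ m, P.map (U₁ m) = volume.restrict (Icc (0 : ℝ) 1))
    (hiid : iIndepFun (β := fun _ : Fin d ⊕ Fin d => ℝ)
      (Sum.elim U₀ U₁) P)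
    (hIU : IndepFun I (fun ω j => Sum.elim U₀ U₁ j ω) P)
    (u : Fin d → ℝ) (hu : ∀ m, u m ∈ Icc (0 : ℝ) 1) :
    (P {ω | ∀ m, U₀ m ω ^ (1 - p m) * U₁ m ω ^ bval (I ω m) ≤ u m}).toReal
      = ∑ i : Fin d → Bool, (P {ω | I ω = i}).toReal *
          ∏ m, (u m ^ (1 - p m)⁻¹ - bval (i m) * ((u m ^ (1 - p m)⁻¹ - u m) / p m)) := by
  set J : Ω → Fin d → ℝ × ℝ := fun ω m => (U₀ m ω, U₁ m ω)
  set G : (Fin d → Bool) → Fin d → Set (ℝ × ℝ) :=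
    fun i m => {q | q.1 ^ (1 - p m) * q.2 ^ bval (i m) ≤ u m}
  have hJ : Measurable J := measurable_pi_lambda _ fun m => (hU₀ m).prodMk (hU₁ m)
  have hpair : Measurable fun (x : Fin d ⊕ Fin d → ℝ) m => (x (.inl m), x (.inr m)) := by
    fun_prop
  have hIJ : IndepFun I J P := hIU.comp measurable_id hpair
  have hJlaw : P.map J = Measure.pi fun _ => Measure.prod 𝕌 𝕌 := by
    simp only [J, map_prodMk_eq_pi_prod_of_iIndepFun hU₀ hU₁ hiid, hU₀law, hU₁law]
  have hevent : {ω | ∀ m, U₀ m ω ^ (1 - p m) * U₁ m ω ^ bval (I ω m) ≤ u m}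
      = {ω | J ω ∈ univ.pi (G (I ω))} := by
    ext ω
    simp [J, G]
  have hG : ∀ i, MeasurableSet (univ.pi (G i)) := fun i =>
    .univ_pi fun m => measurableSet_le (by fun_prop) measurable_const
  rw [hevent, measure_setOf_mem_eq_tsum_of_indepFun hI hJ hIJ hG, tsum_fintype,
    ENNReal.toReal_sum fun i _ => by finiteness]
  refine Finset.sum_congr rfl fun i _ => ?_
  rw [hJlaw, Measure.pi_pi, ENNReal.toReal_mul, ENNReal.toReal_prod]
  congr 1
  exact Finset.prod_congr rfl fun m _ => toReal_uniform_prod_rpow_mul_rpow_bval_le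
    (hp m).1 (hp m).2 (hu m).1 (hu m).2 (i m)

/-- Fix `d ≥ 2` and `p ∈ (0,1)^d`.  Let `I` be a `{0,1}^d`-valued random vector with
`P(I_m = 1) = p_m`, let `U₀`, `U₁` be vectors of i.i.d. standard uniform random variables,
with `I, U₀, U₁` mutually independent, and set `U_m = U₀ₘ^(1-p_m) * U₁ₘ^(I_m)`.
Then the joint cdf of `U` at `u ∈ [0,1]^d` equals the GFGM copula
`Σ_{i∈{0,1}^d} P(I = i) Π_m (u_m^{1/(1-p_m)} - i_m (u_m^{1/(1-p_m)} - u_m)/p_m)`. -/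
theorem gfgm_copula_of_stochastic_representation
    {Ω : Type*} [MeasurableSpace Ω] (P : Measure Ω) [IsProbabilityMeasure P]
    (d : ℕ) (hd : 2 ≤ d) (p : Fin d → ℝ) (hp : ∀ m, p m ∈ Ioo (0 : ℝ) 1)
    (I : Ω → Fin d → Bool) (U₀ U₁ : Fin d → Ω → ℝ)
    (hI : Measurable I) (hU₀ : ∀ m, Measurable (U₀ m)) (hU₁ : ∀ m, Measurable (U₁ m))
    (hU₀law : ∀ m, P.map (U₀ m) = volume.restrict (Icc (0 : ℝ) 1))
    (hU₁law : ∀ m, P.map (U₁ m) = volume.restrict (Icc (0 : ℝ) 1))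
    (hImarg : ∀ m, P {ω | I ω m = true} = ENNReal.ofReal (p m))
    (hiid : iIndepFun (β := fun _ : Fin d ⊕ Fin d => ℝ)
      (Sum.elim U₀ U₁) P)
    (hIU : IndepFun I (fun ω j => Sum.elim U₀ U₁ j ω) P)
    (u : Fin d → ℝ) (hu : ∀ m, u m ∈ Icc (0 : ℝ) 1) :
    (P {ω | ∀ m, U₀ m ω ^ (1 - p m) * U₁ m ω ^ bval (I ω m) ≤ u m}).toReal
      = ∑ i : Fin d → Bool, (P {ω | I ω = i}).toReal *
          ∏ m, (u m ^ (1 - p m)⁻¹ - bval (i m) * ((u m ^ (1 - p m)⁻¹ - u m) / p m)) :=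
  gfgm_copula_of_stochastic_representation_general P d p hp I U₀ U₁ hI hU₀ hU₁ hU₀law hU₁law hiid
    hIU u hu
end

section
/- Fix d ≥ 2 and p = (p₁,…,p_d) ∈ (0,1)^d. Let I be any {0,1}^d-valued random vector with P(I_m = 1) = p_m for each m, and let I^c be the comonotonic Bernoulli vector with the same margins, i.e. I^c_m = 1{V > 1 - p_m} for a single random variable V uniform on [0,1]. Construct U from I and U^{EPD-GFGM} from I^c via the GFGM representation U_m = U₀,ₘ^{1-p_m}·U₁,ₘ^{I_m} (respectively with I^c), where U₀, U₁ are vectors of i.i.d. standard uniform random variables on [0,1] independent of the Bernoulli vector. Then E[φ(U)] ≤ E[φ(U^{EPD-GFGM})] for every bounded measurable supermodular function φ: ℝ^d → ℝ. -/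
open MeasureTheory ProbabilityTheory Set

/-!
For fixed `u ∈ [0,1]^{2d}` the GFGM map `b ↦ (u₀ₘ^{1-pₘ} · u₁ₘ^{bₘ})ₘ` is antitone in each
coordinate, so it exchanges `⊔` and `⊓`; hence `Ψ b = E φ(gfgm b U)` is supermodular on
`{0,1}^d`, and by independence the two sides are `E Ψ(I)` and `E Ψ(I^c)`.
Let `σ` list the coordinates by decreasing `pₘ` and `c_k` be the indicator of its first `k`
entries. Walking from `0` to `b` through `b ⊓ c_k`, supermodularity gives
`Ψ b ≤ Ψ c₀ + ∑ₖ b_{σ k} (Ψ c_{k+1} - Ψ c_k)`. The right side is affine in `b`, so its mean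
depends only on the margins, and it is an equality when `k ↦ b_{σ k}` is antitone, which is
the case for every value of `I^c`.
-/
def Supermodular {α : Type*} [Lattice α] (f : α → ℝ) : Prop :=
  ∀ x y, f x + f y ≤ f (x ⊔ y) + f (x ⊓ y)

namespace Supermodular

variable {α : Type*} [Lattice α]

theorem comp_antitone {ι β γ : Type*} [LinearOrder β] [LinearOrder γ] {φ : (ι → β) → ℝ}
    (hφ : Supermodular φ) {h : ι → γ → β} (hh : ∀ i, Antitone (h i)) :
    Supermodular fun b : ι → γ => φ fun i => h i (b i) := by
  intro x y
  have hsup : (fun i => h i ((x ⊔ y) i)) = (fun i => h i (x i)) ⊓ fun i => h i (y i) :=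
    funext fun i => (hh i).map_max
  have hinf : (fun i => h i ((x ⊓ y) i)) = (fun i => h i (x i)) ⊔ fun i => h i (y i) :=
    funext fun i => (hh i).map_min
  simp only [hsup, hinf]
  linarith [hφ (fun i => h i (x i)) fun i => h i (y i)]

theorem integral {β : Type*} [MeasurableSpace β] {μ : Measure β} {F : α → β → ℝ}
    (hF : ∀ a, Integrable (F a) μ) (h : ∀ᵐ z ∂μ, Supermodular fun a => F a z) :
    Supermodular fun a => ∫ z, F a z ∂μ := by
  intro x y
  rw [← integral_add (hF x) (hF y), ← integral_add (hF _) (hF _)]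
  exact integral_mono_ae ((hF x).add (hF y)) ((hF _).add (hF _)) (h.mono fun z hz => hz x y)

end Supermodular

namespace Equiv.Perm

variable {d : ℕ} (σ : Equiv.Perm (Fin d))

def prefixInd (k : ℕ) : Fin d → Bool := fun m => decide ((σ.symm m : ℕ) < k)

theorem prefixInd_zero : σ.prefixInd 0 = ⊥ := by
  funext m; simp [prefixInd]

theorem prefixInd_card : σ.prefixInd d = ⊤ := by
  funext m; simp [prefixInd]

theorem prefixInd_mono : Monotone σ.prefixInd := fun j k hjk m => by
  simp only [prefixInd, Bool.le_iff_imp, decide_eq_true_eq]; omega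

theorem prefixInd_succ_apply (k m : Fin d) :
    σ.prefixInd (k + 1) m = (σ.prefixInd k m || decide (m = σ k)) := by
  simp only [prefixInd, Nat.lt_succ_iff_lt_or_eq, Fin.val_inj, σ.symm_apply_eq, Bool.decide_or]

variable {σ} {b : Fin d → Bool} {k : Fin d}

theorem inf_prefixInd_succ_of_false (h : b (σ k) = false) :
    b ⊓ σ.prefixInd (k + 1) = b ⊓ σ.prefixInd k := by
  funext m
  by_cases hm : m = σ k
  · simp [hm, h]
  · simp [prefixInd_succ_apply, hm]

theorem prefixInd_sup_inf_succ_of_true (h : b (σ k) = true) :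
    σ.prefixInd k ⊔ (b ⊓ σ.prefixInd (k + 1)) = σ.prefixInd (k + 1) := by
  funext m
  by_cases hm : m = σ k
  · simp [hm, h, prefixInd_succ_apply]
  · simp [prefixInd_succ_apply, hm]

theorem prefixInd_le_of_antitone (hb : Antitone (b ∘ σ)) (h : b (σ k) = true) :
    σ.prefixInd (k + 1) ≤ b := fun m => by
  simp only [prefixInd, Bool.le_iff_imp, decide_eq_true_eq]
  intro hm
  have := hb (Fin.mk_le_mk.2 (Nat.lt_succ_iff.1 hm) : σ.symm m ≤ k)
  simpa [h, Bool.le_iff_imp] using this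

end Equiv.Perm

section ChainInterp

variable {d : ℕ} (Ψ : (Fin d → Bool) → ℝ) (σ : Equiv.Perm (Fin d))

noncomputable def chainInterp (b : Fin d → Bool) : ℝ :=
  Ψ (σ.prefixInd 0) +
    ∑ k : Fin d, bval (b (σ k)) * (Ψ (σ.prefixInd (k + 1)) - Ψ (σ.prefixInd k))

variable {Ψ σ}

theorem sub_prefixInd_zero_eq_sum (b : Fin d → Bool) :
    Ψ b - Ψ (σ.prefixInd 0) =
      ∑ k : Fin d, (Ψ (b ⊓ σ.prefixInd (k + 1)) - Ψ (b ⊓ σ.prefixInd k)) := by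
  rw [Fin.sum_univ_eq_sum_range (fun k => Ψ (b ⊓ σ.prefixInd (k + 1)) - Ψ (b ⊓ σ.prefixInd k)),
    Finset.sum_range_sub (fun k => Ψ (b ⊓ σ.prefixInd k)), σ.prefixInd_card, σ.prefixInd_zero,
    inf_top_eq, inf_bot_eq]

theorem Supermodular.inf_prefixInd_succ_sub_le (hΨ : Supermodular Ψ) (b : Fin d → Bool)
    (k : Fin d) :
    Ψ (b ⊓ σ.prefixInd (k + 1)) - Ψ (b ⊓ σ.prefixInd k) ≤
      bval (b (σ k)) * (Ψ (σ.prefixInd (k + 1)) - Ψ (σ.prefixInd k)) := by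
  cases h : b (σ k)
  · simp [Equiv.Perm.inf_prefixInd_succ_of_false h, bval]
  · have hinf : b ⊓ σ.prefixInd (k + 1) ⊓ σ.prefixInd k = b ⊓ σ.prefixInd k := by
      rw [inf_assoc, inf_eq_right.2 (σ.prefixInd_mono (Nat.le_succ k))]
    have := hΨ (b ⊓ σ.prefixInd (k + 1)) (σ.prefixInd k)
    rw [sup_comm, Equiv.Perm.prefixInd_sup_inf_succ_of_true h, hinf] at this
    simp only [bval, if_true, one_mul]
    linarith

theorem inf_prefixInd_succ_sub_of_antitone {b : Fin d → Bool} (hb : Antitone (b ∘ σ))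
    (k : Fin d) :
    Ψ (b ⊓ σ.prefixInd (k + 1)) - Ψ (b ⊓ σ.prefixInd k) =
      bval (b (σ k)) * (Ψ (σ.prefixInd (k + 1)) - Ψ (σ.prefixInd k)) := by
  cases h : b (σ k)
  · simp [Equiv.Perm.inf_prefixInd_succ_of_false h, bval]
  · have hle := Equiv.Perm.prefixInd_le_of_antitone hb h
    rw [inf_eq_right.2 hle, inf_eq_right.2 ((σ.prefixInd_mono (Nat.le_succ k)).trans hle)]
    simp [bval]

theorem Supermodular.le_chainInterp (hΨ : Supermodular Ψ) (b : Fin d → Bool) :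
    Ψ b ≤ chainInterp Ψ σ b := by
  have := sub_prefixInd_zero_eq_sum (Ψ := Ψ) (σ := σ) b
  have := Finset.sum_le_sum fun k (_ : k ∈ Finset.univ) =>
    hΨ.inf_prefixInd_succ_sub_le (σ := σ) b k
  rw [chainInterp]
  linarith

theorem chainInterp_eq_of_antitone {b : Fin d → Bool} (hb : Antitone (b ∘ σ)) :
    chainInterp Ψ σ b = Ψ b := by
  rw [chainInterp, ← Finset.sum_congr rfl fun k _ => inf_prefixInd_succ_sub_of_antitone hb k,
    ← sub_prefixInd_zero_eq_sum, add_sub_cancel]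

theorem integral_bval_apply {α : Type*} [MeasurableSpace α] {μ : Measure α}
    {B : α → Fin d → Bool} (hB : Measurable B) (m : Fin d) :
    ∫ a, bval (B a m) ∂μ = μ.real {a | B a m = true} := by
  have hs : MeasurableSet {a | B a m = true} := hB.eval (measurableSet_singleton true)
  rw [← integral_indicator_one hs]
  congr with a
  by_cases h : B a m = true <;> simp [bval, h]

theorem integral_chainInterp {α : Type*} [MeasurableSpace α] {μ : Measure α}
    [IsProbabilityMeasure μ] {B : α → Fin d → Bool} (hB : Measurable B) :
    ∫ a, chainInterp Ψ σ (B a) ∂μ = Ψ (σ.prefixInd 0) +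
      ∑ k : Fin d, μ.real {a | B a (σ k) = true} *
        (Ψ (σ.prefixInd (k + 1)) - Ψ (σ.prefixInd k)) := by
  have hint : ∀ m, Integrable (fun a => bval (B a m)) μ := fun m =>
    (integrable_const (1 : ℝ)).mono'
      ((Measurable.of_discrete (f := bval)).comp (hB.eval (a := m))).aestronglyMeasurable
      (ae_of_all _ fun a => by cases B a m <;> simp [bval])
  simp only [chainInterp]
  rw [integral_add (integrable_const _) (integrable_finsetSum _ fun k _ => (hint _).mul_const _),
    integral_const, integral_finsetSum _ fun k _ => (hint _).mul_const _]
  simp [integral_mul_const, integral_bval_apply hB]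

end ChainInterp

theorem Supermodular.integral_le_integral_of_antitone {d : ℕ} {Ψ : (Fin d → Bool) → ℝ}
    (hΨ : Supermodular Ψ) {α β : Type*} [MeasurableSpace α] [MeasurableSpace β]
    {μ : Measure α} {ν : Measure β} [IsProbabilityMeasure μ] [IsProbabilityMeasure ν]
    {B : α → Fin d → Bool} {C : β → Fin d → Bool} (hB : Measurable B) (hC : Measurable C)
    (hmarg : ∀ m, μ {a | B a m = true} = ν {c | C c m = true})
    (σ : Equiv.Perm (Fin d)) (hCσ : ∀ c, Antitone (C c ∘ σ)) :
    ∫ a, Ψ (B a) ∂μ ≤ ∫ c, Ψ (C c) ∂ν :=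
  calc ∫ a, Ψ (B a) ∂μ ≤ ∫ a, chainInterp Ψ σ (B a) ∂μ :=
        integral_mono ((Integrable.of_finite (f := Ψ)).comp_measurable hB)
          ((Integrable.of_finite (f := chainInterp Ψ σ)).comp_measurable hB)
          fun a => hΨ.le_chainInterp (B a)
    _ = ∫ c, chainInterp Ψ σ (C c) ∂ν := by
        simp only [integral_chainInterp hB, integral_chainInterp hC, measureReal_def, hmarg]
    _ = ∫ c, Ψ (C c) ∂ν := by simp only [chainInterp_eq_of_antitone (hCσ _)]

theorem ProbabilityTheory.IndepFun.integral_comp_eq_integral_integral {Ω β γ : Type*}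
    [MeasurableSpace Ω] [MeasurableSpace β] [MeasurableSpace γ] {P : Measure Ω}
    [IsFiniteMeasure P] {B : Ω → β} {X : Ω → γ} (hBX : IndepFun B X P) (hB : Measurable B)
    (hX : Measurable X) {F : β → γ → ℝ}
    (hF : Integrable (Function.uncurry F) ((P.map B).prod (P.map X))) :
    ∫ ω, F (B ω) (X ω) ∂P = ∫ ω, ∫ x, F (B ω) x ∂(P.map X) ∂P := by
  have hmap := hBX.map_prod_eq_prod_map_map hB.aemeasurable hX.aemeasurable
  calc ∫ ω, F (B ω) (X ω) ∂P = ∫ z, Function.uncurry F z ∂(P.map fun ω => (B ω, X ω)) :=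
        (integral_map (hB.prodMk hX).aemeasurable (hmap ▸ hF.1)).symm
    _ = ∫ b, ∫ x, F b x ∂(P.map X) ∂(P.map B) := by rw [hmap, integral_prod _ hF]; rfl
    _ = ∫ ω, ∫ x, F (B ω) x ∂(P.map X) ∂P :=
        integral_map hB.aemeasurable hF.integral_prod_left.1

theorem ProbabilityTheory.iIndepFun.indepFun_sumElim {ι κ Ω β : Type*} [Fintype ι]
    [Fintype κ] [MeasurableSpace Ω] [MeasurableSpace β] {P : Measure Ω} {f : ι → Ω → β}
    {g : κ → Ω → β}
    (h : iIndepFun (Sum.elim f g) P) (hf : ∀ i, Measurable (f i)) (hg : ∀ j, Measurable (g j)) :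
    IndepFun (fun ω i => f i ω) (fun ω j => g j ω) P := by
  have := h.indepFun_finset (Finset.univ.map .inl) (Finset.univ.map .inr)
    (by simp [Finset.disjoint_left]) (Sum.forall.2 ⟨hf, hg⟩)
  exact this.comp (measurable_pi_lambda _ fun i => measurable_pi_apply ⟨.inl i, by simp⟩)
    (measurable_pi_lambda _ fun j => measurable_pi_apply ⟨.inr j, by simp⟩)

instance inst_s8 : IsProbabilityMeasure (volume.restrict (Icc (0 : ℝ) 1)) := ⟨by simp⟩

theorem volume_restrict_Icc_Ioi {a : ℝ} (ha : a ∈ Icc (0 : ℝ) 1) :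
    volume.restrict (Icc (0 : ℝ) 1) (Ioi a) = ENNReal.ofReal (1 - a) := by
  have hset : Ioi a ∩ Icc 0 1 = Ioc a 1 := by
    ext x
    simp only [mem_inter_iff, mem_Ioi, mem_Icc, mem_Ioc]
    exact ⟨fun ⟨h1, _, h2⟩ => ⟨h1, h2⟩, fun ⟨h1, h2⟩ => ⟨h1, ha.1.trans h1.le, h2⟩⟩
  rw [Measure.restrict_apply measurableSet_Ioi, hset, Real.volume_Ioc]

section GFGM

variable {d : ℕ}

noncomputable def gfgm (p : Fin d → ℝ) (b : Fin d → Bool) (u : Fin d ⊕ Fin d → ℝ) :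
    Fin d → ℝ := fun m => u (Sum.inl m) ^ (1 - p m) * u (Sum.inr m) ^ bval (b m)

theorem measurable_gfgm (p : Fin d → ℝ) :
    Measurable fun z : (Fin d → Bool) × (Fin d ⊕ Fin d → ℝ) => gfgm p z.1 z.2 := by
  unfold gfgm
  fun_prop

theorem antitone_mul_rpow_bval {A t : ℝ} (hA : 0 ≤ A) (ht : t ≤ 1) :
    Antitone fun b : Bool => A * t ^ bval b := by
  intro a b hab
  cases a <;> cases b
  all_goals first
    | exact absurd hab (by decide)
    | simp [bval, mul_le_of_le_one_right hA ht]

theorem Supermodular.comp_gfgm {φ : (Fin d → ℝ) → ℝ} (hφ : Supermodular φ) (p : Fin d → ℝ)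
    {u : Fin d ⊕ Fin d → ℝ} (hu : ∀ j, u j ∈ Icc (0 : ℝ) 1) :
    Supermodular fun b => φ (gfgm p b u) :=
  hφ.comp_antitone fun m => antitone_mul_rpow_bval
    (Real.rpow_nonneg (hu (Sum.inl m)).1 _) (hu (Sum.inr m)).2

theorem Supermodular.integral_comp_gfgm {φ : (Fin d → ℝ) → ℝ} (hφ : Supermodular φ)
    (hφm : Measurable φ) {c : ℝ} (hc : ∀ x, |φ x| ≤ c) (p : Fin d → ℝ) :
    Supermodular fun b =>
      ∫ u, φ (gfgm p b u) ∂(Measure.pi fun _ => volume.restrict (Icc (0 : ℝ) 1)) := by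
  refine Supermodular.integral (fun b => Integrable.of_bound ?_ c
    (ae_of_all _ fun _ => (Real.norm_eq_abs _).trans_le (hc _))) ?_
  · exact (hφm.comp ((measurable_gfgm p).comp measurable_prodMk_left)).aestronglyMeasurable
  · filter_upwards [Filter.eventually_all.2 fun j : Fin d ⊕ Fin d =>
      Measure.tendsto_eval_ae_ae.eventually (ae_restrict_mem measurableSet_Icc)] with u hu
    exact hφ.comp_gfgm p hu

theorem integral_comp_gfgm_of_indepFun {Ω : Type*} [MeasurableSpace Ω] {P : Measure Ω}
    [IsFiniteMeasure P] (p : Fin d → ℝ) {B : Ω → Fin d → Bool} {U : Fin d ⊕ Fin d → Ω → ℝ}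
    (hB : Measurable B) (hU : ∀ j, Measurable (U j))
    (hUlaw : ∀ j, P.map (U j) = volume.restrict (Icc (0 : ℝ) 1)) (hUind : iIndepFun U P)
    (hBU : IndepFun B (fun ω j => U j ω) P) {φ : (Fin d → ℝ) → ℝ} (hφ : Measurable φ) {c : ℝ}
    (hc : ∀ x, |φ x| ≤ c) :
    ∫ ω, φ (gfgm p (B ω) fun j => U j ω) ∂P =
      ∫ ω, ∫ u, φ (gfgm p (B ω) u) ∂(Measure.pi fun _ => volume.restrict (Icc (0 : ℝ) 1))
        ∂P := by
  have hlaw : P.map (fun ω j => U j ω) = Measure.pi fun _ => volume.restrict (Icc (0 : ℝ) 1) :=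
    by simp only [hUind.map_fun_eq_pi_map fun j => (hU j).aemeasurable, hUlaw]
  rw [← hlaw]
  exact hBU.integral_comp_eq_integral_integral (F := fun b u => φ (gfgm p b u)) hB
    (measurable_pi_lambda _ hU)
    (Integrable.of_bound (hφ.comp (measurable_gfgm p)).aestronglyMeasurable c
      (ae_of_all _ fun _ => (Real.norm_eq_abs _).trans_le (hc _)))

end GFGM

section Comonotone

variable {d : ℕ} (p : Fin d → ℝ)

noncomputable def comonotoneBernoulli (v : ℝ) (m : Fin d) : Bool := decide (1 - p m < v)

theorem measurable_comonotoneBernoulli : Measurable (comonotoneBernoulli p) :=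
  measurable_pi_lambda _ fun m => measurable_to_bool <| by
    convert measurableSet_Ioi (a := 1 - p m)
    ext; simp [comonotoneBernoulli]

theorem antitone_comonotoneBernoulli_comp_sort (v : ℝ) :
    Antitone (comonotoneBernoulli p v ∘ Tuple.sort fun m => 1 - p m) := fun j k hjk => by
  have := Tuple.monotone_sort (fun m => 1 - p m) hjk
  simp only [Function.comp_apply, comonotoneBernoulli, Bool.le_iff_imp, decide_eq_true_eq] at this ⊢
  exact this.trans_lt

theorem measure_comonotoneBernoulli_apply {Ω : Type*} [MeasurableSpace Ω] {P : Measure Ω}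
    {V : Ω → ℝ} (hV : Measurable V) (hVlaw : P.map V = volume.restrict (Icc (0 : ℝ) 1))
    {m : Fin d} (hpm : p m ∈ Icc (0 : ℝ) 1) :
    P {ω | comonotoneBernoulli p (V ω) m = true} = ENNReal.ofReal (p m) := by
  have hset : {ω | comonotoneBernoulli p (V ω) m = true} = V ⁻¹' Ioi (1 - p m) := by
    ext; simp [comonotoneBernoulli]
  rw [hset, ← Measure.map_apply hV measurableSet_Ioi, hVlaw,
    volume_restrict_Icc_Ioi ⟨by linarith [hpm.2], by linarith [hpm.1]⟩, sub_sub_cancel]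

end Comonotone

theorem gfgm_epd_supermodular_max_general
    {Ω : Type*} [MeasurableSpace Ω] (P : Measure Ω) [IsProbabilityMeasure P]
    {Ω' : Type*} [MeasurableSpace Ω'] (P' : Measure Ω') [IsProbabilityMeasure P']
    (d : ℕ) (p : Fin d → ℝ) (hp : ∀ m, p m ∈ Ioo (0 : ℝ) 1)
    (I : Ω → Fin d → Bool) (U₀ U₁ : Fin d → Ω → ℝ)
    (V : Ω' → ℝ) (U₀' U₁' : Fin d → Ω' → ℝ)
    (hI : Measurable I) (hU₀ : ∀ m, Measurable (U₀ m)) (hU₁ : ∀ m, Measurable (U₁ m))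
    (hV : Measurable V) (hU₀' : ∀ m, Measurable (U₀' m)) (hU₁' : ∀ m, Measurable (U₁' m))
    (hU₀law : ∀ m, P.map (U₀ m) = volume.restrict (Icc (0 : ℝ) 1))
    (hU₁law : ∀ m, P.map (U₁ m) = volume.restrict (Icc (0 : ℝ) 1))
    (hVlaw : P'.map V = volume.restrict (Icc (0 : ℝ) 1))
    (hU₀law' : ∀ m, P'.map (U₀' m) = volume.restrict (Icc (0 : ℝ) 1))
    (hU₁law' : ∀ m, P'.map (U₁' m) = volume.restrict (Icc (0 : ℝ) 1))
    (hImarg : ∀ m, P {ω | I ω m = true} = ENNReal.ofReal (p m))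
    (hiid : iIndepFun
      (Sum.elim U₀ U₁) P)
    (hIU : IndepFun I (fun ω j => Sum.elim U₀ U₁ j ω) P)
    (hiid' : iIndepFun
      (Sum.elim (fun _ : Unit => V) (Sum.elim U₀' U₁')) P') :
    ∀ φ : (Fin d → ℝ) → ℝ, Measurable φ → (∃ c : ℝ, ∀ x, |φ x| ≤ c) →
      (∀ x y, φ x + φ y ≤ φ (x ⊔ y) + φ (x ⊓ y)) →
      ∫ ω, φ (fun m => U₀ m ω ^ (1 - p m) * U₁ m ω ^ bval (I ω m)) ∂P
        ≤ ∫ ω, φ (fun m =>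
            U₀' m ω ^ (1 - p m) * U₁' m ω ^ (if 1 - p m < V ω then (1 : ℝ) else 0)) ∂P' := by
  intro φ hφ ⟨c, hc⟩ hsm
  set Ψ : (Fin d → Bool) → ℝ :=
    fun b => ∫ u, φ (gfgm p b u) ∂(Measure.pi fun _ => volume.restrict (Icc (0 : ℝ) 1))
  have hΨ : Supermodular Ψ := Supermodular.integral_comp_gfgm (φ := φ) hsm hφ hc p
  have hIc : Measurable (comonotoneBernoulli p ∘ V) := (measurable_comonotoneBernoulli p).comp hV
  have hmarg : ∀ m, P {ω | I ω m = true} = P' {ω | comonotoneBernoulli p (V ω) m = true} :=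
    fun m => by
      rw [hImarg, measure_comonotoneBernoulli_apply p hV hVlaw (Ioo_subset_Icc_self (hp m))]
  have hU' : ∀ j, Measurable (Sum.elim U₀' U₁' j) := Sum.forall.2 ⟨hU₀', hU₁'⟩
  have hIcU' : IndepFun (comonotoneBernoulli p ∘ V) (fun ω j => Sum.elim U₀' U₁' j ω) P' :=
    (hiid'.indepFun_sumElim (fun _ => hV) hU').comp
      ((measurable_comonotoneBernoulli p).comp (measurable_pi_apply ())) measurable_id
  calc _ = ∫ ω, Ψ (I ω) ∂P :=
        integral_comp_gfgm_of_indepFun p hI (Sum.forall.2 ⟨hU₀, hU₁⟩)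
          (Sum.forall.2 ⟨hU₀law, hU₁law⟩) hiid hIU hφ hc
    _ ≤ ∫ ω, Ψ (comonotoneBernoulli p (V ω)) ∂P' :=
        hΨ.integral_le_integral_of_antitone hI hIc hmarg _
          fun ω => antitone_comonotoneBernoulli_comp_sort p (V ω)
    _ = _ := (integral_comp_gfgm_of_indepFun p hIc hU' (Sum.forall.2 ⟨hU₀law', hU₁law'⟩)
          (hiid'.precomp (g := Sum.inr) Sum.inr_injective) hIcU' hφ hc).symm
    _ = _ := by
      congr with ω
      unfold gfgm
      simp [bval, comonotoneBernoulli]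

/-- For any `{0,1}^d`-valued `I` with margins `p`, the GFGM vector built from `I` is
dominated, in the supermodular order, by the GFGM vector built from the comonotonic
Bernoulli vector `I^c` with the same margins, `I^c_m = 1{V > 1 - p_m}` for a single
uniform `V`.  The latter gives the extreme positive dependence (EPD) GFGM copula. -/
theorem gfgm_epd_supermodular_max
    {Ω : Type*} [MeasurableSpace Ω] (P : Measure Ω) [IsProbabilityMeasure P]
    {Ω' : Type*} [MeasurableSpace Ω'] (P' : Measure Ω') [IsProbabilityMeasure P']
    (d : ℕ) (hd : 2 ≤ d) (p : Fin d → ℝ) (hp : ∀ m, p m ∈ Ioo (0 : ℝ) 1)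
    (I : Ω → Fin d → Bool) (U₀ U₁ : Fin d → Ω → ℝ)
    (V : Ω' → ℝ) (U₀' U₁' : Fin d → Ω' → ℝ)
    (hI : Measurable I) (hU₀ : ∀ m, Measurable (U₀ m)) (hU₁ : ∀ m, Measurable (U₁ m))
    (hV : Measurable V) (hU₀' : ∀ m, Measurable (U₀' m)) (hU₁' : ∀ m, Measurable (U₁' m))
    (hU₀law : ∀ m, P.map (U₀ m) = volume.restrict (Icc (0 : ℝ) 1))
    (hU₁law : ∀ m, P.map (U₁ m) = volume.restrict (Icc (0 : ℝ) 1))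
    (hVlaw : P'.map V = volume.restrict (Icc (0 : ℝ) 1))
    (hU₀law' : ∀ m, P'.map (U₀' m) = volume.restrict (Icc (0 : ℝ) 1))
    (hU₁law' : ∀ m, P'.map (U₁' m) = volume.restrict (Icc (0 : ℝ) 1))
    (hImarg : ∀ m, P {ω | I ω m = true} = ENNReal.ofReal (p m))
    (hiid : iIndepFun
      (Sum.elim U₀ U₁) P)
    (hIU : IndepFun I (fun ω j => Sum.elim U₀ U₁ j ω) P)
    (hiid' : iIndepFun
      (Sum.elim (fun _ : Unit => V) (Sum.elim U₀' U₁')) P') :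
    ∀ φ : (Fin d → ℝ) → ℝ, Measurable φ → (∃ c : ℝ, ∀ x, |φ x| ≤ c) →
      (∀ x y, φ x + φ y ≤ φ (x ⊔ y) + φ (x ⊓ y)) →
      ∫ ω, φ (fun m => U₀ m ω ^ (1 - p m) * U₁ m ω ^ bval (I ω m)) ∂P
        ≤ ∫ ω, φ (fun m =>
            U₀' m ω ^ (1 - p m) * U₁' m ω ^ (if 1 - p m < V ω then (1 : ℝ) else 0)) ∂P' :=
  gfgm_epd_supermodular_max_general P P' d p hp I U₀ U₁ V U₀' U₁' hI hU₀ hU₁ hV hU₀' hU₁' hU₀law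
    hU₁law hVlaw hU₀law' hU₁law' hImarg hiid hIU hiid'
end

section
/- Fix d ≥ 2 and p ∈ (0,1). Let V, U₀,₁,…,U₀,_d, U₁,₁,…,U₁,_d be mutually independent standard uniform random variables on [0,1], set I = 1{V > 1-p} and U_m = U₀,ₘ^{1-p}·U₁,ₘ^{I} for m = 1,…,d (so the underlying Bernoulli vector is comonotonic with all margins p). Then Spearman's rho derived from average upper orthant dependence equals ρ^{cU} = ((d+1)/(2^d - d - 1))·( (2/(2-p))^d·( 1 - p + p/2^d ) - 1 ), where ρ^{cU} = ((d+1)/(2^d-d-1))·( 2^d·E[ Π_{m=1}^d U_m ] - 1 ). -/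
open MeasureTheory ProbabilityTheory Set

/-!
Given `I = 0` (probability `1 - p`) the `Uₘ = U₀ₘ^(1-p)` are independent with mean `1/(2-p)`;
given `I = 1` (probability `p`) the `Uₘ = U₀ₘ^(1-p) U₁ₘ` are independent with mean
`1/(2(2-p))`. Hence `E[∏ Uₘ] = (1-p)(2-p)⁻ᵈ + p(2(2-p))⁻ᵈ`. Formally, the joint law of
`(V, U₀, U₁)` is a product of uniform laws, and `∏ Uₘ` is the sum of two products of
one-coordinate factors, each integrated by Fubini.
-/

lemma setIntegral_Icc_zero_one_rpow {r : ℝ} (hr : -1 < r) :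
    ∫ t in Icc (0 : ℝ) 1, t ^ r = (r + 1)⁻¹ := by
  rw [integral_Icc_eq_integral_Ioc, ← intervalIntegral.integral_of_le zero_le_one,
    integral_rpow (.inl hr), Real.one_rpow, Real.zero_rpow (by linarith)]
  ring

lemma ProbabilityTheory.iIndepFun.map_fun_eq_pi_of_map_eq {Ω ι β : Type*} [MeasurableSpace Ω]
    [MeasurableSpace β] [Fintype ι] {P : Measure Ω} {X : ι → Ω → β} {ν : Measure β}
    (hX : iIndepFun X P) (hm : ∀ i, AEMeasurable (X i) P) (hlaw : ∀ i, P.map (X i) = ν) :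
    P.map (fun ω i => X i ω) = Measure.pi fun _ => ν := by
  simp_rw [hX.map_fun_eq_pi_map hm, hlaw]

lemma measureReal_restrict_Icc_zero_one_Ioi {a : ℝ} (ha : a ∈ Icc (0 : ℝ) 1) :
    (volume.restrict (Icc (0 : ℝ) 1)).real (Ioi a) = 1 - a := by
  have : Ioi a ∩ Icc 0 1 = Ioc a 1 := by
    ext t; simp only [mem_inter_iff, mem_Ioi, mem_Icc, mem_Ioc]; grind
  rw [measureReal_restrict_apply measurableSet_Ioi, this, Real.volume_real_Ioc_of_le ha.2]

lemma measureReal_restrict_Icc_zero_one_Iic {a : ℝ} (ha : a ∈ Icc (0 : ℝ) 1) :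
    (volume.restrict (Icc (0 : ℝ) 1)).real (Iic a) = a := by
  have : Iic a ∩ Icc 0 1 = Icc 0 a := by
    ext t; simp only [mem_inter_iff, mem_Iic, mem_Icc]; grind
  rw [measureReal_restrict_apply measurableSet_Iic, this, Real.volume_real_Icc_of_le ha.1,
    sub_zero]

section ProductIntegrals

variable {κ : Type*} [Fintype κ]

noncomputable def coordFactor (w : ℝ → ℝ) (a b : ℝ) : Unit ⊕ κ ⊕ κ → ℝ → ℝ :=
  Sum.elim (fun _ => w) (Sum.elim (fun _ t => t ^ a) (fun _ t => t ^ b))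

lemma prod_coordFactor (w : ℝ → ℝ) (a b : ℝ) (x : Unit ⊕ κ ⊕ κ → ℝ) :
    ∏ i, coordFactor w a b i (x i) =
      w (x (.inl ())) * ∏ m, (x (.inr (.inl m)) ^ a * x (.inr (.inr m)) ^ b) := by
  simp [coordFactor, Fintype.prod_sum_type, Finset.prod_mul_distrib]

lemma integrable_prod_coordFactor {w : ℝ → ℝ} (hw : Integrable w (volume.restrict (Icc 0 1)))
    {a b : ℝ} (ha : 0 ≤ a) (hb : 0 ≤ b) :
    Integrable (fun x : Unit ⊕ κ ⊕ κ → ℝ => ∏ i, coordFactor w a b i (x i))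
      (Measure.pi fun _ => volume.restrict (Icc (0 : ℝ) 1)) := by
  refine Integrable.fintype_prod fun i => ?_
  rcases i with _ | _ | _
  exacts [hw, (Real.continuous_rpow_const ha).integrableOn_Icc,
    (Real.continuous_rpow_const hb).integrableOn_Icc]

lemma integral_prod_coordFactor (w : ℝ → ℝ) {a b : ℝ} (ha : -1 < a) (hb : -1 < b) :
    ∫ x : Unit ⊕ κ ⊕ κ → ℝ, ∏ i, coordFactor w a b i (x i)
        ∂(Measure.pi fun _ => volume.restrict (Icc (0 : ℝ) 1)) =
      (∫ t in Icc (0 : ℝ) 1, w t) * ((a + 1)⁻¹ * (b + 1)⁻¹) ^ Fintype.card κ := by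
  rw [integral_fintype_prod_eq_prod]
  simp [Fintype.prod_sum_type, coordFactor,
    setIntegral_Icc_zero_one_rpow ha, setIntegral_Icc_zero_one_rpow hb, mul_pow]

/-- `∏ₘ Uₘ` as a function of `x = (V, U₀, U₁)`, with threshold `c = 1 - p` and exponent
`a = 1 - p`. -/
noncomputable def gfgmProduct (c a : ℝ) (x : Unit ⊕ κ ⊕ κ → ℝ) : ℝ :=
  ∏ m, (x (.inr (.inl m)) ^ a * x (.inr (.inr m)) ^ (if c < x (.inl ()) then (1 : ℝ) else 0))

lemma gfgmProduct_eq (c a : ℝ) (x : Unit ⊕ κ ⊕ κ → ℝ) :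
    gfgmProduct c a x = (∏ i, coordFactor ((Iic c).indicator fun _ => 1) a 0 i (x i)) +
      ∏ i, coordFactor ((Ioi c).indicator fun _ => 1) a 1 i (x i) := by
  simp only [gfgmProduct, prod_coordFactor]
  rcases lt_or_ge c (x (.inl ())) with h | h
  · simp [h, h.not_ge]
  · simp [h, h.not_gt]

lemma integrable_gfgmProduct (c : ℝ) {a : ℝ} (ha : 0 ≤ a) :
    Integrable (gfgmProduct (κ := κ) c a)
      (Measure.pi fun _ => volume.restrict (Icc (0 : ℝ) 1)) := by
  simp_rw [funext (gfgmProduct_eq c a)]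
  exact (integrable_prod_coordFactor
      ((integrable_const 1).indicator measurableSet_Iic) ha le_rfl).add
    (integrable_prod_coordFactor ((integrable_const 1).indicator measurableSet_Ioi) ha zero_le_one)

lemma integral_gfgmProduct {c a : ℝ} (hc : c ∈ Icc (0 : ℝ) 1) (ha : 0 ≤ a) :
    ∫ x, gfgmProduct (κ := κ) c a x ∂(Measure.pi fun _ => volume.restrict (Icc (0 : ℝ) 1)) =
      c * (a + 1)⁻¹ ^ Fintype.card κ + (1 - c) * ((a + 1)⁻¹ * 2⁻¹) ^ Fintype.card κ := by
  simp_rw [gfgmProduct_eq]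
  rw [integral_add
    (integrable_prod_coordFactor ((integrable_const 1).indicator measurableSet_Iic) ha le_rfl)
    (integrable_prod_coordFactor ((integrable_const 1).indicator measurableSet_Ioi) ha zero_le_one),
    integral_prod_coordFactor _ (by linarith) (by norm_num),
    integral_prod_coordFactor _ (by linarith) (by norm_num),
    integral_indicator_const _ measurableSet_Iic, integral_indicator_const _ measurableSet_Ioi,
    measureReal_restrict_Icc_zero_one_Iic hc, measureReal_restrict_Icc_zero_one_Ioi hc]
  norm_num

end ProductIntegrals

theorem gfgm_epd_rho_cU_general
    {Ω : Type*} [MeasurableSpace Ω] (P : Measure Ω) [IsProbabilityMeasure P]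
    (d : ℕ) (p : ℝ) (hp : p ∈ Ioo (0 : ℝ) 1)
    (V : Ω → ℝ) (U₀ U₁ : Fin d → Ω → ℝ)
    (hV : Measurable V) (hU₀ : ∀ m, Measurable (U₀ m)) (hU₁ : ∀ m, Measurable (U₁ m))
    (hVlaw : P.map V = volume.restrict (Icc (0 : ℝ) 1))
    (hU₀law : ∀ m, P.map (U₀ m) = volume.restrict (Icc (0 : ℝ) 1))
    (hU₁law : ∀ m, P.map (U₁ m) = volume.restrict (Icc (0 : ℝ) 1))
    (hiid : iIndepFun
      (Sum.elim (fun _ : Unit => V) (Sum.elim U₀ U₁)) P) :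
    ((d : ℝ) + 1) / (2 ^ d - d - 1) *
        ((2 : ℝ) ^ d * (∫ ω, ∏ m,
          (U₀ m ω ^ (1 - p) * U₁ m ω ^ (if 1 - p < V ω then (1 : ℝ) else 0)) ∂P) - 1)
      = ((d : ℝ) + 1) / (2 ^ d - d - 1) *
          ((2 / (2 - p)) ^ d * (1 - p + p / 2 ^ d) - 1) := by
  set X : Unit ⊕ Fin d ⊕ Fin d → Ω → ℝ := Sum.elim (fun _ => V) (Sum.elim U₀ U₁)
  have hX : ∀ i, Measurable (X i) := by
    rintro (_ | m | m)
    exacts [hV, hU₀ m, hU₁ m]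
  have hmap : P.map (fun ω i => X i ω) = Measure.pi fun _ => volume.restrict (Icc (0 : ℝ) 1) :=
    hiid.map_fun_eq_pi_of_map_eq (fun i => (hX i).aemeasurable) <| by
      rintro (_ | m | m)
      exacts [hVlaw, hU₀law m, hU₁law m]
  have hc : 1 - p ∈ Icc (0 : ℝ) 1 := ⟨by linarith [hp.2], by linarith [hp.1]⟩
  have hE : ∫ ω, ∏ m,
        (U₀ m ω ^ (1 - p) * U₁ m ω ^ (if 1 - p < V ω then (1 : ℝ) else 0)) ∂P =
      (1 - p) * (2 - p)⁻¹ ^ d + p * ((2 - p)⁻¹ * 2⁻¹) ^ d := by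
    change ∫ ω, gfgmProduct (1 - p) (1 - p) (fun i => X i ω) ∂P = _
    rw [← integral_map (measurable_pi_lambda _ hX).aemeasurable
      (hmap ▸ (integrable_gfgmProduct _ hc.1).aestronglyMeasurable), hmap,
      integral_gfgmProduct hc hc.1]
    simp only [Fintype.card_fin, sub_sub_cancel, show 1 - p + 1 = 2 - p by ring]
  rw [hE, div_eq_mul_inv 2, div_eq_mul_inv p, mul_pow, mul_pow, inv_pow 2]
  ring

/-- Fix `d ≥ 2`, `p ∈ (0,1)`.  Let `V, U₀,₁,…,U₀,d, U₁,₁,…,U₁,d` be mutually independent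
standard uniforms, `I = 1{V > 1-p}` and `U_m = U₀ₘ^(1-p) * U₁ₘ^I` (the comonotonic /
extreme positive dependence GFGM construction with all margins `p`).  Then Spearman's rho
from average upper orthant dependence equals
`ρ^{cU} = ((d+1)/(2^d-d-1)) ((2/(2-p))^d (1 - p + p/2^d) - 1)`, where
`ρ^{cU} = ((d+1)/(2^d-d-1)) (2^d E[Π_m U_m] - 1)`. -/
theorem gfgm_epd_rho_cU
    {Ω : Type*} [MeasurableSpace Ω] (P : Measure Ω) [IsProbabilityMeasure P]
    (d : ℕ) (hd : 2 ≤ d) (p : ℝ) (hp : p ∈ Ioo (0 : ℝ) 1)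
    (V : Ω → ℝ) (U₀ U₁ : Fin d → Ω → ℝ)
    (hV : Measurable V) (hU₀ : ∀ m, Measurable (U₀ m)) (hU₁ : ∀ m, Measurable (U₁ m))
    (hVlaw : P.map V = volume.restrict (Icc (0 : ℝ) 1))
    (hU₀law : ∀ m, P.map (U₀ m) = volume.restrict (Icc (0 : ℝ) 1))
    (hU₁law : ∀ m, P.map (U₁ m) = volume.restrict (Icc (0 : ℝ) 1))
    (hiid : iIndepFun
      (Sum.elim (fun _ : Unit => V) (Sum.elim U₀ U₁)) P) :
    ((d : ℝ) + 1) / (2 ^ d - d - 1) *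
        ((2 : ℝ) ^ d * (∫ ω, ∏ m,
          (U₀ m ω ^ (1 - p) * U₁ m ω ^ (if 1 - p < V ω then (1 : ℝ) else 0)) ∂P) - 1)
      = ((d : ℝ) + 1) / (2 ^ d - d - 1) *
          ((2 / (2 - p)) ^ d * (1 - p + p / 2 ^ d) - 1) :=
  gfgm_epd_rho_cU_general P d p hp V U₀ U₁ hV hU₀ hU₁ hVlaw hU₀law hU₁law hiid
end

section
/- Fix d ≥ 2 and p ∈ (0,1), and let f be the pmf on {0,1}^d with f((0,…,0)) = 1-p, f((1,…,1)) = p, and f(i) = 0 otherwise. Then Kendall's tau of the corresponding GFGM copula satisfies τ = ( p(1-p)/(2^{d-1}-1) )·( (3-p)^d - 2(2-p)^d + (1-p)^d )/(2-p)^d, where τ = (1/(2^{d-1}-1))·( 2^d·Σ_{i,j∈{0,1}^d} f(i)f(j)·Π_{m=1}^d ( 1/2 - (i_m+j_m)/(2p) + (j_m(1-p)+i_m)/(p(2-p)) ) - 1 ). -/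
/-!
The comonotonic pmf is supported on the two constant vectors `0` and `1`, so the double sum has
only four terms, and on a pair of constant vectors the product kernel is the `d`-th power of a
single factor: `1/2` on the diagonal, `(1-p)/(2(2-p))` at `(0,1)` and `(3-p)/(2(2-p))` at
`(1,0)`. Since `(1-p)² + p² - 1 = -2p(1-p)`, what remains is an identity of rational functions.
-/

open MeasureTheory ProbabilityTheory Set

noncomputable def gfgmFactor (p : ℝ) (a b : Bool) : ℝ :=
  1 / 2 - (bval a + bval b) / (2 * p) + (bval b * (1 - p) + bval a) / (p * (2 - p))

section gfgmFactor

variable {p : ℝ}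

lemma gfgmFactor_self (hp : p ≠ 0) (h2p : 2 - p ≠ 0) (a : Bool) : gfgmFactor p a a = 1 / 2 := by
  cases a
  · norm_num [gfgmFactor, bval]
  · simp only [gfgmFactor, bval, if_true]
    field_simp
    ring

lemma gfgmFactor_false_true (hp : p ≠ 0) (h2p : 2 - p ≠ 0) :
    gfgmFactor p false true = (1 - p) / (2 * (2 - p)) := by
  simp only [gfgmFactor, bval, Bool.false_eq_true, if_false, if_true]
  field_simp
  ring

lemma gfgmFactor_true_false (hp : p ≠ 0) (h2p : 2 - p ≠ 0) :
    gfgmFactor p true false = (3 - p) / (2 * (2 - p)) := by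
  simp only [gfgmFactor, bval, Bool.false_eq_true, if_false, if_true]
  field_simp
  ring

end gfgmFactor

lemma Fintype.sum_sum_mul_mul_eq_of_support_pair {ι R : Type*} [Fintype ι] [DecidableEq ι]
    [CommSemiring R] {f : ι → R} (G : ι → ι → R) {a b : ι} (hab : a ≠ b)
    (hf : ∀ x, x ≠ a ∧ x ≠ b → f x = 0) :
    ∑ i, ∑ j, f i * f j * G i j =
      f a * f a * G a a + f a * f b * G a b + (f b * f a * G b a + f b * f b * G b b) := by
  have hrow : ∀ i, ∑ j, f i * f j * G i j = f i * f a * G i a + f i * f b * G i b :=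
    fun i => Fintype.sum_eq_add a b hab fun j hj => by simp [hf j hj]
  simp only [hrow]
  exact Fintype.sum_eq_add a b hab fun i hi => by simp [hf i hi]

lemma two_pow_mul_comonotone_sum_sub_one {p : ℝ} (h2p : 2 - p ≠ 0) (d : ℕ) :
    2 ^ d * ((1 - p) * (1 - p) * (1 / 2) ^ d + (1 - p) * p * ((1 - p) / (2 * (2 - p))) ^ d
        + (p * (1 - p) * ((3 - p) / (2 * (2 - p))) ^ d + p * p * (1 / 2) ^ d)) - 1
      = p * (1 - p) * (((3 - p) ^ d - 2 * (2 - p) ^ d + (1 - p) ^ d) / (2 - p) ^ d) := by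
  rw [div_pow, div_pow, div_pow, mul_pow]
  field_simp
  ring

/-- Fix `d ≥ 2` and `p ∈ (0,1)`, and let `f` be the pmf of the comonotonic Bernoulli
vector with all margins `p`.  Then Kendall's tau of the corresponding GFGM copula equals
`τ = (p(1-p)/(2^{d-1}-1)) ((3-p)^d - 2(2-p)^d + (1-p)^d)/(2-p)^d`. -/
theorem gfgm_epd_kendall_tau
    (d : ℕ) (hd : 2 ≤ d) (p : ℝ) (hp : p ∈ Ioo (0 : ℝ) 1)
    (f : (Fin d → Bool) → ℝ)
    (hf : ∀ i, f i = if i = (fun _ => false) then 1 - p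
      else if i = (fun _ => true) then p else 0) :
    (1 / ((2 : ℝ) ^ (d - 1) - 1)) *
        ((2 : ℝ) ^ d * (∑ i : Fin d → Bool, ∑ j : Fin d → Bool, f i * f j *
          ∏ m, (1 / 2 - (bval (i m) + bval (j m)) / (2 * p)
            + (bval (j m) * (1 - p) + bval (i m)) / (p * (2 - p)))) - 1)
      = (p * (1 - p) / ((2 : ℝ) ^ (d - 1) - 1)) *
          (((3 - p) ^ d - 2 * (2 - p) ^ d + (1 - p) ^ d) / (2 - p) ^ d) := by
  have hp0 : p ≠ 0 := hp.1.ne'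
  have h2p : 2 - p ≠ 0 := by linarith [hp.2]
  have hne : (fun _ => false : Fin d → Bool) ≠ fun _ => true :=
    fun h => absurd (congrFun h ⟨0, by omega⟩) Bool.false_ne_true
  have hf0 : f (fun _ => false) = 1 - p := by simp [hf]
  have hf1 : f (fun _ => true) = p := by simp [hf, hne.symm]
  have hsupp : ∀ i, i ≠ (fun _ => false) ∧ i ≠ (fun _ => true) → f i = 0 := fun i hi => by
    simp [hf, hi.1, hi.2]
  change _ * (_ * ∑ i, ∑ j, f i * f j * ∏ m, gfgmFactor p (i m) (j m) - 1) = _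
  rw [Fintype.sum_sum_mul_mul_eq_of_support_pair _ hne hsupp]
  simp only [Fin.prod_const, hf0, hf1, gfgmFactor_self hp0 h2p,
    gfgmFactor_false_true hp0 h2p, gfgmFactor_true_false hp0 h2p]
  rw [two_pow_mul_comonotone_sum_sub_one h2p]
  ring
end
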